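/- arXiv:1907.08697 — 6 statements merged into one kernel-verified Lean document; each statement's English description precedes it below -/
import Mathlib

section
/- (Theorem 1) Let L and N be real d×p matrices with d ≥ 2, and set Z = L Nᵀ. Then the minimum of ‖L − G N‖_F² over all extended orthogonal Givens transformations G (over all index pairs i < j and all 2×2 orthogonal blocks) equals ‖L‖_F² + ‖N‖_F² − 2·(tr(Z) + max_{i<j} C_ij(Z)), where C_ij(Z) = ‖Z_{⟨i,j⟩}‖_* − tr(Z_{⟨i,j⟩}). The minimum is attained by the transformation acting on a pair (i*, j*) maximizing C_ij(Z) whose 2×2 block G̃ satisfies tr(G̃ᵀ Z_{⟨i*,j*⟩}) = ‖Z_{⟨i*,j*⟩}‖_*. -/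
/-!
For orthogonal `G`, `‖L − G N‖_F² = ‖L‖_F² + ‖N‖_F² − 2 tr(Gᵀ Z)` with `Z = L Nᵀ`, and for an
extended Givens transformation on `(i, j)` only the block changes the trace:
`tr(Gᵀ Z) = tr Z − tr Z_{⟨i,j⟩} + tr(G̃ᵀ Z_{⟨i,j⟩})`. So everything reduces to maximizing
`tr(G̃ᵀ A)` over 2×2 orthogonal `G̃`. For 2×2 matrices `‖A‖_*² = ‖A‖_F² + 2 |det A|`, while
`‖A‖_F² + 2 det A` resp. `‖A‖_F² − 2 det A` is `x² + y²`, where `tr(G̃ᵀ A) = c x + s y` for the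
rotation resp. reflection with parameters `(c, s)`. By Cauchy–Schwarz the trace is at most
`‖A‖_*`, with equality for the right choice of `(c, s)` (a rotation if `det A ≥ 0`, a reflection
otherwise).
-/

open Matrix

/-- Squared Frobenius norm of a real matrix. -/
def frobSq {m n : ℕ} (A : Matrix (Fin m) (Fin n) ℝ) : ℝ := ∑ i, ∑ j, (A i j) ^ 2

/-- The singular values of a real square matrix `A`: the square roots of the
eigenvalues of `AᵀA` (here `Aᴴ = Aᵀ` since the matrix is real). -/
noncomputable def singVals {n : ℕ} (A : Matrix (Fin n) (Fin n) ℝ) : Fin n → ℝ :=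
  fun i => Real.sqrt ((Matrix.isHermitian_conjTranspose_mul_self A).eigenvalues i)

/-- The nuclear norm of a real square matrix: the sum of its singular values. -/
noncomputable def nuclearNorm {n : ℕ} (A : Matrix (Fin n) (Fin n) ℝ) : ℝ :=
  ∑ i, singVals A i

/-- The 2×2 submatrix `Z_{⟨i,j⟩} = [[Z_ii, Z_ij],[Z_ji, Z_jj]]`. -/
def sub2 {d : ℕ} (Z : Matrix (Fin d) (Fin d) ℝ) (i j : Fin d) : Matrix (Fin 2) (Fin 2) ℝ :=
  !![Z i i, Z i j; Z j i, Z j j]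

/-- The score `C_ij(Z) = ‖Z_{⟨i,j⟩}‖_* − tr(Z_{⟨i,j⟩})`. -/
noncomputable def score {d : ℕ} (Z : Matrix (Fin d) (Fin d) ℝ) (i j : Fin d) : ℝ :=
  nuclearNorm (sub2 Z i j) - (sub2 Z i j).trace

/-- An extended orthogonal Givens transformation on indices `i < j`: equal to the identity
except for the 2×2 block on rows/columns `i, j`, which is either a rotation
`[[c, −s],[s, c]]` or a reflection `[[c, s],[s, −c]]` with `c² + s² = 1`. -/
def IsExtGivens {d : ℕ} (i j : Fin d) (G : Matrix (Fin d) (Fin d) ℝ) : Prop :=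
  (∃ c s : ℝ, c ^ 2 + s ^ 2 = 1 ∧
    ((G i i = c ∧ G i j = -s ∧ G j i = s ∧ G j j = c) ∨
     (G i i = c ∧ G i j = s ∧ G j i = s ∧ G j j = -c))) ∧
  (∀ k, k ≠ i → k ≠ j → G k k = 1) ∧
  (∀ k l, k ≠ l → ¬(k = i ∧ l = j) → ¬(k = j ∧ l = i) → G k l = 0)

/-- A Givens rotation on indices `i < j`. -/
def IsGivensRotation {d : ℕ} (i j : Fin d) (G : Matrix (Fin d) (Fin d) ℝ) : Prop :=
  (∃ c s : ℝ, c ^ 2 + s ^ 2 = 1 ∧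
    G i i = c ∧ G i j = -s ∧ G j i = s ∧ G j j = c) ∧
  (∀ k, k ≠ i → k ≠ j → G k k = 1) ∧
  (∀ k l, k ≠ l → ¬(k = i ∧ l = j) → ¬(k = j ∧ l = i) → G k l = 0)

/-- The squared off-diagonal "norm" `off(M)² = Σ_{t≠q} M_tq²`. -/
def offSq {d : ℕ} (M : Matrix (Fin d) (Fin d) ℝ) : ℝ :=
  ∑ t, ∑ q, if t ≠ q then (M t q) ^ 2 else 0

lemma frobSq_eq_trace {m n : ℕ} (M : Matrix (Fin m) (Fin n) ℝ) : frobSq M = (Mᵀ * M).trace := by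
  simp only [frobSq, trace, diag, mul_apply, transpose_apply, sq]
  exact Finset.sum_comm

lemma frobSq_sub_mul_of_transpose_mul_self {m n : ℕ} (L N : Matrix (Fin m) (Fin n) ℝ)
    {G : Matrix (Fin m) (Fin m) ℝ} (hG : Gᵀ * G = 1) :
    frobSq (L - G * N) = frobSq L + frobSq N - 2 * (Gᵀ * (L * Nᵀ)).trace := by
  have hcross : (Lᵀ * (G * N)).trace = (Gᵀ * (L * Nᵀ)).trace := by
    rw [← trace_transpose, transpose_mul, transpose_mul, transpose_transpose, Matrix.mul_assoc,
      trace_mul_comm, Matrix.mul_assoc]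
  have hnorm : (G * N)ᵀ * (G * N) = Nᵀ * N := by
    rw [transpose_mul, Matrix.mul_assoc, ← Matrix.mul_assoc Gᵀ, hG, Matrix.one_mul]
  simp only [frobSq_eq_trace, transpose_sub, Matrix.sub_mul, Matrix.mul_sub, trace_sub, hnorm]
  rw [← trace_transpose ((G * N)ᵀ * L), transpose_mul, transpose_transpose, hcross]
  ring

section TwoByTwo

lemma frobSq_fin_two (A : Matrix (Fin 2) (Fin 2) ℝ) :
    frobSq A = A 0 0 ^ 2 + A 0 1 ^ 2 + A 1 0 ^ 2 + A 1 1 ^ 2 := by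
  simp [frobSq, Fin.sum_univ_two, add_assoc]

/-- The eigenvalues of `AᵀA` have sum `‖A‖_F²` and product `(det A)²`, so the sum of their
square roots squares to `‖A‖_F² + 2 |det A|`. -/
lemma nuclearNorm_fin_two (A : Matrix (Fin 2) (Fin 2) ℝ) :
    nuclearNorm A = √(frobSq A + 2 * |A.det|) := by
  have hH := isHermitian_conjTranspose_mul_self A
  set μ := hH.eigenvalues
  have hμ : ∀ k, 0 ≤ μ k := (posSemidef_conjTranspose_mul_self A).eigenvalues_nonneg
  have hsum : μ 0 + μ 1 = frobSq A := by
    have := hH.trace_eq_sum_eigenvalues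
    simp only [Fin.sum_univ_two, RCLike.ofReal_real_eq_id, id] at this
    rw [frobSq_eq_trace, ← this, conjTranspose_eq_transpose_of_trivial]
  have hprod : μ 0 * μ 1 = A.det ^ 2 := by
    have := hH.det_eq_prod_eigenvalues
    simp only [Fin.prod_univ_two, RCLike.ofReal_real_eq_id, id] at this
    rw [← this, conjTranspose_eq_transpose_of_trivial, det_mul, det_transpose, sq]
  have hroots : √(μ 0) * √(μ 1) = |A.det| := by
    rw [← Real.sqrt_mul (hμ 0), hprod, Real.sqrt_sq_eq_abs]
  rw [nuclearNorm, Fin.sum_univ_two]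
  change √(μ 0) + √(μ 1) = _
  rw [← Real.sqrt_sq (by positivity : 0 ≤ √(μ 0) + √(μ 1)),
    add_sq, Real.sq_sqrt (hμ 0), Real.sq_sqrt (hμ 1), mul_assoc, hroots, ← hsum]
  ring_nf

lemma frobSq_fin_two_add_two_mul_det (A : Matrix (Fin 2) (Fin 2) ℝ) :
    frobSq A + 2 * A.det = (A 0 0 + A 1 1) ^ 2 + (A 1 0 - A 0 1) ^ 2 := by
  rw [frobSq_fin_two, det_fin_two]; ring

lemma frobSq_fin_two_sub_two_mul_det (A : Matrix (Fin 2) (Fin 2) ℝ) :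
    frobSq A - 2 * A.det = (A 0 0 - A 1 1) ^ 2 + (A 0 1 + A 1 0) ^ 2 := by
  rw [frobSq_fin_two, det_fin_two]; ring

lemma mul_add_mul_le_sqrt {c s : ℝ} (hcs : c ^ 2 + s ^ 2 = 1) (x y : ℝ) :
    c * x + s * y ≤ √(x ^ 2 + y ^ 2) :=
  Real.le_sqrt_of_sq_le (by nlinarith [sq_nonneg (c * y - s * x)])

lemma exists_mul_add_mul_eq_sqrt (x y : ℝ) :
    ∃ c s : ℝ, c ^ 2 + s ^ 2 = 1 ∧ c * x + s * y = √(x ^ 2 + y ^ 2) := by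
  set r := √(x ^ 2 + y ^ 2)
  have hr2 : r ^ 2 = x ^ 2 + y ^ 2 := Real.sq_sqrt (by positivity)
  rcases (Real.sqrt_nonneg _ : 0 ≤ r).eq_or_lt with hr | hr
  · refine ⟨1, 0, by norm_num, ?_⟩
    nlinarith [sq_nonneg x, sq_nonneg y]
  · have hr0 : r ≠ 0 := hr.ne'
    refine ⟨x / r, y / r, ?_, ?_⟩ <;> field_simp <;> nlinarith [hr2]

/-- Every 2×2 orthogonal matrix has one of these two forms. -/
def IsRotOrRefl (B : Matrix (Fin 2) (Fin 2) ℝ) : Prop :=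
  ∃ c s : ℝ, c ^ 2 + s ^ 2 = 1 ∧ (B = !![c, -s; s, c] ∨ B = !![c, s; s, -c])

lemma trace_transpose_mul_fin_two (B A : Matrix (Fin 2) (Fin 2) ℝ) :
    (Bᵀ * A).trace = B 0 0 * A 0 0 + B 1 0 * A 1 0 + B 0 1 * A 0 1 + B 1 1 * A 1 1 := by
  simp only [trace_fin_two, mul_apply, transpose_apply, Fin.sum_univ_two]
  ring

lemma trace_rotation_transpose_mul (c s : ℝ) (A : Matrix (Fin 2) (Fin 2) ℝ) :
    (!![c, -s; s, c]ᵀ * A).trace = c * (A 0 0 + A 1 1) + s * (A 1 0 - A 0 1) := by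
  rw [trace_transpose_mul_fin_two]
  simp only [of_apply, cons_val', cons_val_zero, cons_val_fin_one, cons_val_one]
  ring

lemma trace_reflection_transpose_mul (c s : ℝ) (A : Matrix (Fin 2) (Fin 2) ℝ) :
    (!![c, s; s, -c]ᵀ * A).trace = c * (A 0 0 - A 1 1) + s * (A 0 1 + A 1 0) := by
  rw [trace_transpose_mul_fin_two]
  simp only [of_apply, cons_val', cons_val_zero, cons_val_fin_one, cons_val_one]
  ring

lemma IsRotOrRefl.trace_transpose_mul_le {B : Matrix (Fin 2) (Fin 2) ℝ} (hB : IsRotOrRefl B)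
    (A : Matrix (Fin 2) (Fin 2) ℝ) : (Bᵀ * A).trace ≤ nuclearNorm A := by
  rw [nuclearNorm_fin_two]
  obtain ⟨c, s, hcs, rfl | rfl⟩ := hB
  · rw [trace_rotation_transpose_mul]
    refine (mul_add_mul_le_sqrt hcs _ _).trans (Real.sqrt_le_sqrt ?_)
    rw [← frobSq_fin_two_add_two_mul_det]
    linarith [le_abs_self A.det]
  · rw [trace_reflection_transpose_mul]
    refine (mul_add_mul_le_sqrt hcs _ _).trans (Real.sqrt_le_sqrt ?_)
    rw [← frobSq_fin_two_sub_two_mul_det]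
    linarith [neg_abs_le A.det]

lemma exists_isRotOrRefl_trace_transpose_mul_eq (A : Matrix (Fin 2) (Fin 2) ℝ) :
    ∃ B, IsRotOrRefl B ∧ (Bᵀ * A).trace = nuclearNorm A := by
  rw [nuclearNorm_fin_two]
  rcases le_total 0 A.det with hdet | hdet
  · obtain ⟨c, s, hcs, hopt⟩ := exists_mul_add_mul_eq_sqrt (A 0 0 + A 1 1) (A 1 0 - A 0 1)
    refine ⟨!![c, -s; s, c], ⟨c, s, hcs, Or.inl rfl⟩, ?_⟩
    rw [abs_of_nonneg hdet, frobSq_fin_two_add_two_mul_det, trace_rotation_transpose_mul, hopt]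
  · obtain ⟨c, s, hcs, hopt⟩ := exists_mul_add_mul_eq_sqrt (A 0 0 - A 1 1) (A 0 1 + A 1 0)
    refine ⟨!![c, s; s, -c], ⟨c, s, hcs, Or.inr rfl⟩, ?_⟩
    rw [abs_of_nonpos hdet, mul_neg, ← sub_eq_add_neg, frobSq_fin_two_sub_two_mul_det,
      trace_reflection_transpose_mul, hopt]

end TwoByTwo

section Givens

variable {d : ℕ} {i j : Fin d} {G : Matrix (Fin d) (Fin d) ℝ}

lemma IsExtGivens.apply_eq_one_apply (hG : IsExtGivens i j G) {k l : Fin d}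
    (hkl : (k ≠ i ∧ k ≠ j) ∨ (l ≠ i ∧ l ≠ j)) : G k l = (1 : Matrix (Fin d) (Fin d) ℝ) k l := by
  obtain ⟨-, hdiag, hoff⟩ := hG
  by_cases h : k = l
  · subst h
    rw [one_apply_eq]
    exact hdiag k (by tauto) (by tauto)
  · rw [one_apply_ne h]
    exact hoff k l h (by tauto) (by tauto)

lemma IsExtGivens.sum_apply_mul_of_ne (hG : IsExtGivens i j G) {k : Fin d} (hki : k ≠ i)
    (hkj : k ≠ j) (f : Fin d → ℝ) : ∑ m, G m k * f m = f k := by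
  simp [hG.apply_eq_one_apply (Or.inr ⟨hki, hkj⟩), one_apply]

lemma IsExtGivens.sum_apply_mul_of_mem (hG : IsExtGivens i j G) (hij : i ≠ j) {k : Fin d}
    (hk : k = i ∨ k = j) (f : Fin d → ℝ) : ∑ m, G m k * f m = G i k * f i + G j k * f j := by
  rw [← Finset.sum_pair hij (f := fun m => G m k * f m)]
  refine (Finset.sum_subset (Finset.subset_univ _) fun m _ hm => ?_).symm
  simp only [Finset.mem_insert, Finset.mem_singleton, not_or] at hm
  have hmk : m ≠ k := by rcases hk with rfl | rfl <;> tauto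
  rw [hG.apply_eq_one_apply (Or.inl hm), one_apply_ne hmk, zero_mul]

lemma IsExtGivens.transpose_mul_self (hG : IsExtGivens i j G) (hij : i ≠ j) : Gᵀ * G = 1 := by
  ext k l
  simp only [mul_apply, transpose_apply]
  by_cases hk : k = i ∨ k = j
  · by_cases hl : l = i ∨ l = j
    · obtain ⟨c, s, hcs, hblock⟩ := hG.1
      rw [hG.sum_apply_mul_of_mem hij hk]
      rcases hk with rfl | rfl <;> rcases hl with rfl | rfl <;>
        rcases hblock with ⟨h₁, h₂, h₃, h₄⟩ | ⟨h₁, h₂, h₃, h₄⟩ <;>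
        simp [h₁, h₂, h₃, h₄, hij, hij.symm] <;> linarith
    · have hkl : k ≠ l := by rintro rfl; exact hl hk
      simp_rw [mul_comm (G _ k)]
      rw [hG.sum_apply_mul_of_ne (by tauto) (by tauto),
        hG.apply_eq_one_apply (Or.inl (by tauto)), one_apply_ne hkl.symm, one_apply_ne hkl]
  · rw [hG.sum_apply_mul_of_ne (by tauto) (by tauto), hG.apply_eq_one_apply (Or.inl (by tauto))]

lemma sub2_trace (Z : Matrix (Fin d) (Fin d) ℝ) (i j : Fin d) :
    (sub2 Z i j).trace = Z i i + Z j j := by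
  simp [sub2, trace_fin_two]

lemma IsExtGivens.trace_transpose_mul (hG : IsExtGivens i j G) (hij : i ≠ j)
    (Z : Matrix (Fin d) (Fin d) ℝ) :
    (Gᵀ * Z).trace = Z.trace - (sub2 Z i j).trace + ((sub2 G i j)ᵀ * sub2 Z i j).trace := by
  have hdefect : ∑ k, ((Gᵀ * Z) k k - Z k k) = ((Gᵀ * Z) i i - Z i i) + ((Gᵀ * Z) j j - Z j j) := by
    rw [← Finset.sum_pair hij (f := fun k => (Gᵀ * Z) k k - Z k k)]
    refine (Finset.sum_subset (Finset.subset_univ _) fun k _ hk => ?_).symm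
    simp only [Finset.mem_insert, Finset.mem_singleton, not_or] at hk
    simp only [mul_apply, transpose_apply, hG.sum_apply_mul_of_ne hk.1 hk.2, sub_self]
  simp only [Finset.sum_sub_distrib, mul_apply, transpose_apply,
    hG.sum_apply_mul_of_mem hij (Or.inl rfl), hG.sum_apply_mul_of_mem hij (Or.inr rfl)] at hdefect
  rw [trace_transpose_mul_fin_two, sub2_trace]
  simp only [trace, diag, mul_apply, transpose_apply, sub2, of_apply, cons_val', cons_val_zero,
    cons_val_fin_one, cons_val_one] at hdefect ⊢
  linarith

lemma IsExtGivens.isRotOrRefl_sub2 (hG : IsExtGivens i j G) : IsRotOrRefl (sub2 G i j) := by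
  obtain ⟨⟨c, s, hcs, ⟨h₁, h₂, h₃, h₄⟩ | ⟨h₁, h₂, h₃, h₄⟩⟩, -, -⟩ := hG
  · exact ⟨c, s, hcs, Or.inl (by rw [sub2, h₁, h₂, h₃, h₄])⟩
  · exact ⟨c, s, hcs, Or.inr (by rw [sub2, h₁, h₂, h₃, h₄])⟩

def givensOfBlock (i j : Fin d) (B : Matrix (Fin 2) (Fin 2) ℝ) : Matrix (Fin d) (Fin d) ℝ :=
  Matrix.of fun k l =>
    if k = i then (if l = i then B 0 0 else if l = j then B 0 1 else 0)
    else if k = j then (if l = i then B 1 0 else if l = j then B 1 1 else 0)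
    else (1 : Matrix (Fin d) (Fin d) ℝ) k l

lemma sub2_givensOfBlock (hij : i ≠ j) (B : Matrix (Fin 2) (Fin 2) ℝ) :
    sub2 (givensOfBlock i j B) i j = B := by
  ext a b
  fin_cases a <;> fin_cases b <;> simp [sub2, givensOfBlock, hij.symm]

lemma isExtGivens_givensOfBlock (hij : i ≠ j) {B : Matrix (Fin 2) (Fin 2) ℝ}
    (hB : IsRotOrRefl B) : IsExtGivens i j (givensOfBlock i j B) := by
  obtain ⟨c, s, hcs, hB⟩ := hB
  refine ⟨⟨c, s, hcs, ?_⟩, fun k hki hkj => ?_, fun k l hkl hij' hji' => ?_⟩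
  · rcases hB with rfl | rfl
    · exact Or.inl (by simp [givensOfBlock, hij.symm])
    · exact Or.inr (by simp [givensOfBlock, hij.symm])
  · simp [givensOfBlock, hki, hkj]
  · by_cases hki : k = i
    · subst hki
      have hli : l ≠ k := fun h => hkl h.symm
      have hlj : l ≠ j := fun h => hij' ⟨rfl, h⟩
      simp [givensOfBlock, hli, hlj]
    · by_cases hkj : k = j
      · subst hkj
        have hli : l ≠ i := fun h => hji' ⟨rfl, h⟩
        have hlj : l ≠ k := fun h => hkl h.symm
        simp [givensOfBlock, hki, hli, hlj]
      · simp [givensOfBlock, hki, hkj, hkl]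

lemma IsExtGivens.frobSq_sub_mul {p : ℕ} (hG : IsExtGivens i j G) (hij : i ≠ j)
    (L N : Matrix (Fin d) (Fin p) ℝ) :
    frobSq (L - G * N) = frobSq L + frobSq N - 2 * ((L * Nᵀ).trace - (sub2 (L * Nᵀ) i j).trace
      + ((sub2 G i j)ᵀ * sub2 (L * Nᵀ) i j).trace) := by
  rw [frobSq_sub_mul_of_transpose_mul_self L N (hG.transpose_mul_self hij),
    hG.trace_transpose_mul hij]

end Givens

/-- Theorem 1: with `Z = L Nᵀ`, the minimum of `‖L − G N‖_F²` over all extended orthogonal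
Givens transformations `G` (over all pairs `i < j` and all 2×2 orthogonal blocks) equals
`‖L‖_F² + ‖N‖_F² − 2(tr Z + max_{i<j} C_ij(Z))`, and is attained at any transformation
acting on a pair maximizing `C_ij(Z)` whose block `G̃` satisfies
`tr(G̃ᵀ Z_{⟨i,j⟩}) = ‖Z_{⟨i,j⟩}‖_*`. -/
theorem stmt4 {d p : ℕ} (hd : 2 ≤ d) (L N : Matrix (Fin d) (Fin p) ℝ)
    (Z : Matrix (Fin d) (Fin d) ℝ) (hZ : Z = L * Nᵀ) :
    ∃ hne : (Finset.univ.filter (fun q : Fin d × Fin d => q.1 < q.2)).Nonempty,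
      IsLeast {x : ℝ | ∃ (i j : Fin d) (G : Matrix (Fin d) (Fin d) ℝ),
          i < j ∧ IsExtGivens i j G ∧ x = frobSq (L - G * N)}
        (frobSq L + frobSq N - 2 * (Z.trace +
          (Finset.univ.filter (fun q : Fin d × Fin d => q.1 < q.2)).sup' hne
            (fun q => score Z q.1 q.2))) ∧
      ∀ (i j : Fin d) (G : Matrix (Fin d) (Fin d) ℝ), i < j →
        (∀ i' j' : Fin d, i' < j' → score Z i' j' ≤ score Z i j) →
        IsExtGivens i j G →
        ((sub2 G i j)ᵀ * sub2 Z i j).trace = nuclearNorm (sub2 Z i j) →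
        frobSq (L - G * N) =
          frobSq L + frobSq N - 2 * (Z.trace + score Z i j) := by
  subst hZ
  have hne : (Finset.univ.filter (fun q : Fin d × Fin d => q.1 < q.2)).Nonempty :=
    ⟨(⟨0, by omega⟩, ⟨1, by omega⟩), by simp⟩
  refine ⟨hne, ⟨?_, ?_⟩, fun i j G hij _ hG hopt => ?_⟩
  · obtain ⟨⟨i, j⟩, hmem, hmax⟩ := Finset.exists_mem_eq_sup' hne fun q => score (L * Nᵀ) q.1 q.2
    obtain ⟨B, hB, hBopt⟩ := exists_isRotOrRefl_trace_transpose_mul_eq (sub2 (L * Nᵀ) i j)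
    have hij : i < j := (Finset.mem_filter.mp hmem).2
    have hG := isExtGivens_givensOfBlock hij.ne hB
    refine ⟨i, j, givensOfBlock i j B, hij, hG, ?_⟩
    rw [hG.frobSq_sub_mul hij.ne, sub2_givensOfBlock hij.ne, hBopt, hmax, score]
    ring
  · rintro x ⟨i, j, G, hij, hG, rfl⟩
    have hblock := hG.isRotOrRefl_sub2.trace_transpose_mul_le (sub2 (L * Nᵀ) i j)
    have hscore := Finset.le_sup' (fun q : Fin d × Fin d => score (L * Nᵀ) q.1 q.2)
      (Finset.mem_filter.mpr ⟨Finset.mem_univ (i, j), hij⟩ :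
        (i, j) ∈ Finset.univ.filter (fun q : Fin d × Fin d => q.1 < q.2))
    rw [hG.frobSq_sub_mul hij.ne]
    rw [score] at hscore
    linarith
  · rw [hG.frobSq_sub_mul hij.ne, hopt, score]
    ring
end

section
/- Let U be a real orthogonal d×d matrix, let i < j, and let G be an extended orthogonal Givens transformation on indices (i,j) whose 2×2 block G̃ satisfies tr(G̃ᵀ U_{⟨i,j⟩}) = ‖U_{⟨i,j⟩}‖_*. Then tr(U Gᵀ) = tr(U) + C_ij(U), and tr(U Gᵀ) ≤ d. -/
/-!
`tr(U Gᵀ) = Σ_{k,l} U_kl G_kl` is the Frobenius pairing of `U` and `G`. Since `G - 1` vanishes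
off the `(i, j)` block, the pairing differs from `tr U = ⟨U, 1⟩` only by
`tr(G̃ᵀ U_{⟨i,j⟩}) - tr(U_{⟨i,j⟩})`, which is the score by the choice of `G̃`. For the bound,
`⟨U, G⟩ ≤ (‖U‖_F² + ‖G‖_F²) / 2`, and both squared Frobenius norms equal `d`: for `U` because
`‖U‖_F² = tr(Uᵀ U)`, for `G` because its block contributes `2(c² + s²) = 2`.
-/

open Matrix

section BlockSums

variable {α : Type*} [Fintype α] {i j : α}

lemma sum_sum_eq_of_eq_zero_off_block (hij : i ≠ j) (f : α → α → ℝ)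
    (hf : ∀ k l, (k ≠ i ∧ k ≠ j) ∨ (l ≠ i ∧ l ≠ j) → f k l = 0) :
    ∑ k, ∑ l, f k l = f i i + f i j + f j i + f j j := by
  have hrow : ∀ k, ∑ l, f k l = f k i + f k j := fun k =>
    Fintype.sum_eq_add i j hij fun l hl => hf k l (Or.inr hl)
  rw [Fintype.sum_eq_add i j hij fun k hk => by
    rw [hrow, hf k i (Or.inl hk), hf k j (Or.inl hk), add_zero], hrow, hrow]
  ring

end BlockSums

section FrobeniusPairing

variable {m n : ℕ}

lemma trace_mul_transpose_eq_sum (A B : Matrix (Fin m) (Fin n) ℝ) :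
    (A * Bᵀ).trace = ∑ k, ∑ l, A k l * B k l := by
  simp [Matrix.trace, Matrix.mul_apply]

lemma frobSq_eq_trace_mul_transpose (A : Matrix (Fin m) (Fin n) ℝ) :
    frobSq A = (A * Aᵀ).trace := by
  simp only [frobSq, trace_mul_transpose_eq_sum, sq]

lemma frobSq_eq_of_transpose_mul_self_eq_one {U : Matrix (Fin n) (Fin n) ℝ} (hU : Uᵀ * U = 1) :
    frobSq U = n := by
  rw [frobSq_eq_trace_mul_transpose, trace_mul_comm, hU, trace_one, Fintype.card_fin]

lemma trace_mul_transpose_le (A B : Matrix (Fin m) (Fin n) ℝ) :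
    (A * Bᵀ).trace ≤ (frobSq A + frobSq B) / 2 := by
  rw [trace_mul_transpose_eq_sum, frobSq, frobSq, ← Finset.sum_add_distrib, Finset.sum_div]
  gcongr with k _
  rw [← Finset.sum_add_distrib, Finset.sum_div]
  gcongr with l _
  nlinarith [sq_nonneg (A k l - B k l)]

end FrobeniusPairing

section Givens

variable {d : ℕ} {i j : Fin d} {G : Matrix (Fin d) (Fin d) ℝ}

lemma trace_mul_transpose_eq_of_eq_one_off_block (hij : i ≠ j)
    (hG : ∀ k l, (k ≠ i ∧ k ≠ j) ∨ (l ≠ i ∧ l ≠ j) → G k l = (1 : Matrix (Fin d) (Fin d) ℝ) k l)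
    (A : Matrix (Fin d) (Fin d) ℝ) :
    (A * Gᵀ).trace = A.trace - (sub2 A i j).trace + ((sub2 G i j)ᵀ * sub2 A i j).trace := by
  have hdiff : (A * Gᵀ).trace - A.trace
      = ∑ k, ∑ l, A k l * (G k l - (1 : Matrix (Fin d) (Fin d) ℝ) k l) := by
    have hA : A.trace = ∑ k, ∑ l, A k l * (1 : Matrix (Fin d) (Fin d) ℝ) k l := by
      simpa using trace_mul_transpose_eq_sum A 1
    simp only [hA, trace_mul_transpose_eq_sum, ← Finset.sum_sub_distrib, mul_sub]
  rw [sum_sum_eq_of_eq_zero_off_block hij _ fun k l hkl => by rw [hG k l hkl, sub_self, mul_zero]]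
    at hdiff
  simp only [sub2, trace_fin_two, mul_apply, Fin.sum_univ_two, transpose_apply, of_apply,
    cons_val', cons_val_zero, cons_val_one, cons_val_fin_one, one_apply_eq, one_apply_ne hij,
    one_apply_ne hij.symm] at hdiff ⊢
  linear_combination hdiff

lemma IsExtGivens.frobSq_eq (hij : i ≠ j) (hG : IsExtGivens i j G) : frobSq G = d := by
  have hdiff : frobSq G - frobSq (1 : Matrix (Fin d) (Fin d) ℝ)
      = ∑ k, ∑ l, (G k l ^ 2 - (1 : Matrix (Fin d) (Fin d) ℝ) k l ^ 2) := by
    simp only [frobSq, ← Finset.sum_sub_distrib]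
  rw [sum_sum_eq_of_eq_zero_off_block hij _ fun k l hkl => by
      rw [hG.apply_eq_one_apply hkl, sub_self],
    frobSq_eq_of_transpose_mul_self_eq_one (U := 1) (by simp), one_apply_eq, one_apply_eq,
    one_apply_ne hij, one_apply_ne hij.symm] at hdiff
  obtain ⟨⟨c, s, hcs, ⟨hGii, hGij, hGji, hGjj⟩ | ⟨hGii, hGij, hGji, hGjj⟩⟩, -⟩ := hG <;>
    rw [hGii, hGij, hGji, hGjj] at hdiff <;> linear_combination hdiff + 2 * hcs

end Givens

/-- If `U` is real orthogonal and `G` is an extended orthogonal Givens transformation on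
`(i,j)` whose block `G̃` satisfies `tr(G̃ᵀ U_{⟨i,j⟩}) = ‖U_{⟨i,j⟩}‖_*`, then
`tr(U Gᵀ) = tr(U) + C_ij(U)` and `tr(U Gᵀ) ≤ d`. -/
theorem stmt5 {d : ℕ} (U G : Matrix (Fin d) (Fin d) ℝ) (hU : Uᵀ * U = 1)
    (i j : Fin d) (hij : i < j) (hG : IsExtGivens i j G)
    (hopt : ((sub2 G i j)ᵀ * sub2 U i j).trace = nuclearNorm (sub2 U i j)) :
    (U * Gᵀ).trace = U.trace + score U i j ∧ (U * Gᵀ).trace ≤ (d : ℝ) := by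
  have htrace := trace_mul_transpose_eq_of_eq_one_off_block hij.ne
    (fun _ _ hkl => hG.apply_eq_one_apply hkl) U
  refine ⟨by rw [htrace, hopt, score]; ring, ?_⟩
  calc (U * Gᵀ).trace ≤ (frobSq U + frobSq G) / 2 := trace_mul_transpose_le U G
    _ = d := by rw [frobSq_eq_of_transpose_mul_self_eq_one hU, hG.frobSq_eq hij.ne]; ring
end

section
/- Let d be even, let U be a real orthogonal d×d matrix, and let (i₁,j₁), …, (i_{d/2}, j_{d/2}) be a partition of {1,…,d} into d/2 disjoint pairs. Then there exist extended orthogonal Givens transformations G₁, …, G_{d/2}, where G_k acts on the pair (i_k, j_k), such that ‖U − G₁ G₂ ⋯ G_{d/2}‖_F² = 2d − 2·Σ_{k=1}^{d/2} ‖U_{⟨i_k, j_k⟩}‖_*. -/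
open Matrix

/-! For orthogonal `U` and `P = G₁ ⋯ G_{d/2}` we have
`‖U − P‖_F² = ‖U‖_F² − 2⟨U, P⟩_F + ‖P‖_F² = 2d − 2⟨U, P⟩_F`.
Listing the indices pair by pair turns `P` into the block diagonal matrix of the 2×2 blocks
`g_k` of the `G_k`, so `⟨U, P⟩_F = Σ_k ⟨U_{⟨i_k,j_k⟩}, g_k⟩_F` and each block can be chosen on
its own. For a 2×2 matrix `A`, `‖A‖_* = √(‖A‖_F² + 2|det A|)`, and `⟨A, g⟩_F` attains this value
for a suitable rotation `g` when `det A ≥ 0` and a suitable reflection when `det A < 0`. -/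

def frobInner {m n : Type*} [Fintype m] [Fintype n] (A B : Matrix m n ℝ) : ℝ :=
  ∑ i, ∑ j, A i j * B i j

section FrobInner

variable {m n : Type*} [Fintype m] [Fintype n]

lemma frobSq_eq_frobInner {a b : ℕ} (A : Matrix (Fin a) (Fin b) ℝ) :
    frobSq A = frobInner A A := by
  simp only [frobSq, frobInner, sq]

lemma frobInner_sub_sub (A B : Matrix m n ℝ) :
    frobInner (A - B) (A - B) = frobInner A A - 2 * frobInner A B + frobInner B B := by
  simp only [frobInner, Matrix.sub_apply, Finset.mul_sum, ← Finset.sum_sub_distrib,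
    ← Finset.sum_add_distrib]
  exact Finset.sum_congr rfl fun _ _ => Finset.sum_congr rfl fun _ _ => by ring

section Reindex

variable {m' n' : Type*} [Fintype m'] [Fintype n'] (e₁ : m ≃ m') (e₂ : n ≃ n')

lemma frobInner_reindex (A B : Matrix m n ℝ) :
    frobInner (reindex e₁ e₂ A) (reindex e₁ e₂ B) = frobInner A B := by
  simp only [frobInner, reindex_apply, submatrix_apply]
  rw [e₁.symm.sum_comp (fun i => ∑ j, A i (e₂.symm j) * B i (e₂.symm j))]
  exact Finset.sum_congr rfl fun i _ => e₂.symm.sum_comp (fun j => A i j * B i j)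

lemma frobInner_reindex_right (A : Matrix m' n' ℝ) (B : Matrix m n ℝ) :
    frobInner A (reindex e₁ e₂ B) = frobInner (reindex e₁.symm e₂.symm A) B := by
  rw [← frobInner_reindex e₁ e₂, ← reindex_symm, Equiv.apply_symm_apply]

end Reindex

lemma frobInner_self_of_transpose_mul_self [DecidableEq n] {A : Matrix m n ℝ}
    (hA : Aᵀ * A = 1) : frobInner A A = Fintype.card n := by
  have h := congrArg trace hA
  rw [trace_one] at h
  simp only [trace, diag, mul_apply, transpose_apply] at h
  rw [frobInner, Finset.sum_comm, h]

lemma frobInner_blockDiagonal {o : Type*} [Fintype o] [DecidableEq o]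
    (A : Matrix (m × o) (n × o) ℝ) (g : o → Matrix m n ℝ) :
    frobInner A (blockDiagonal g) = ∑ k, frobInner (A.submatrix (·, k) (·, k)) (g k) := by
  simp only [frobInner, Fintype.sum_prod_type, blockDiagonal_apply, mul_ite, mul_zero,
    submatrix_apply]
  rw [Finset.sum_comm]
  refine Finset.sum_congr rfl fun k _ => Finset.sum_congr rfl fun i _ => ?_
  rw [Finset.sum_comm]
  simp

end FrobInner

def IsRotationOrReflection (g : Matrix (Fin 2) (Fin 2) ℝ) : Prop :=
  ∃ c s : ℝ, c ^ 2 + s ^ 2 = 1 ∧ (g = !![c, -s; s, c] ∨ g = !![c, s; s, -c])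

lemma IsRotationOrReflection.frobInner_self {g : Matrix (Fin 2) (Fin 2) ℝ}
    (hg : IsRotationOrReflection g) : frobInner g g = 2 := by
  obtain ⟨c, s, hcs, rfl | rfl⟩ := hg <;>
    simp only [frobInner, Fin.sum_univ_two, of_apply, cons_val', cons_val_zero, cons_val_one,
      empty_val', cons_val_fin_one] <;> linear_combination 2 * hcs

lemma exists_sq_add_sq_eq_one_and_mul_add_mul_eq_sqrt (p q : ℝ) :
    ∃ c s : ℝ, c ^ 2 + s ^ 2 = 1 ∧ p * c + q * s = √(p ^ 2 + q ^ 2) := by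
  set z : ℂ := p + q * Complex.I
  have hp : ‖z‖ * Real.cos z.arg = p := by simp [z]
  have hq : ‖z‖ * Real.sin z.arg = q := by simp [z]
  refine ⟨Real.cos z.arg, Real.sin z.arg, Real.cos_sq_add_sin_sq _, ?_⟩
  calc p * Real.cos z.arg + q * Real.sin z.arg
      = ‖z‖ * (Real.cos z.arg ^ 2 + Real.sin z.arg ^ 2) := by rw [← hp, ← hq]; ring
    _ = √(p ^ 2 + q ^ 2) := by rw [Real.cos_sq_add_sin_sq, mul_one, Complex.norm_add_mul_I]

lemma exists_isRotationOrReflection_frobInner_eq_nuclearNorm (A : Matrix (Fin 2) (Fin 2) ℝ) :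
    ∃ g, IsRotationOrReflection g ∧ frobInner A g = nuclearNorm A := by
  have hdet : A.det = A 0 0 * A 1 1 - A 0 1 * A 1 0 := det_fin_two A
  have hfrob : frobSq A = A 0 0 ^ 2 + A 0 1 ^ 2 + A 1 0 ^ 2 + A 1 1 ^ 2 := by
    simp only [frobSq, Fin.sum_univ_two]; ring
  rw [nuclearNorm_fin_two]
  rcases le_or_gt 0 A.det with hd | hd
  · obtain ⟨c, s, hcs, hval⟩ :=
      exists_sq_add_sq_eq_one_and_mul_add_mul_eq_sqrt (A 0 0 + A 1 1) (A 1 0 - A 0 1)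
    refine ⟨!![c, -s; s, c], ⟨c, s, hcs, Or.inl rfl⟩, ?_⟩
    rw [abs_of_nonneg hd, show frobSq A + 2 * A.det = (A 0 0 + A 1 1) ^ 2 + (A 1 0 - A 0 1) ^ 2
      by rw [hfrob, hdet]; ring, ← hval]
    simp only [frobInner, Fin.sum_univ_two, of_apply, cons_val', cons_val_zero, cons_val_one,
      empty_val', cons_val_fin_one]
    ring
  · obtain ⟨c, s, hcs, hval⟩ :=
      exists_sq_add_sq_eq_one_and_mul_add_mul_eq_sqrt (A 0 0 - A 1 1) (A 0 1 + A 1 0)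
    refine ⟨!![c, s; s, -c], ⟨c, s, hcs, Or.inr rfl⟩, ?_⟩
    rw [abs_of_neg hd, show frobSq A + 2 * -A.det = (A 0 0 - A 1 1) ^ 2 + (A 0 1 + A 1 0) ^ 2
      by rw [hfrob, hdet]; ring, ← hval]
    simp only [frobInner, Fin.sum_univ_two, of_apply, cons_val', cons_val_zero, cons_val_one,
      empty_val', cons_val_fin_one]
    ring

lemma List.prod_ofFn_mulSingle {M : Type*} [Monoid M] {n : ℕ} (k : Fin n) (a : M) :
    (List.ofFn (Pi.mulSingle k a)).prod = a := by
  induction n with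
  | zero => exact k.elim0
  | succ n ih =>
    rw [List.ofFn_succ, List.prod_cons]
    rcases Fin.eq_zero_or_eq_succ k with rfl | ⟨k, rfl⟩
    · rw [Pi.mulSingle_eq_same, List.prod_eq_one, mul_one]
      simp [Fin.succ_ne_zero]
    · have htail : (fun i : Fin n => (Pi.mulSingle k.succ a : Fin (n + 1) → M) i.succ) =
          Pi.mulSingle k a := by
        funext i
        simp only [Pi.mulSingle_apply, Fin.succ_inj]
      rw [Pi.mulSingle_eq_of_ne (Fin.succ_ne_zero k).symm, one_mul, htail, ih]

lemma List.prod_ofFn_pi_mulSingle {M : Type*} [Monoid M] {n : ℕ} (g : Fin n → M) :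
    (List.ofFn fun k => Pi.mulSingle k (g k)).prod = g := by
  funext k
  rw [Pi.list_prod_apply, List.map_ofFn, ← List.prod_ofFn_mulSingle k (g k)]
  congr
  funext l
  by_cases h : l = k
  · subst h; simp
  · simp [Pi.mulSingle_eq_of_ne h, Pi.mulSingle_eq_of_ne' h]

noncomputable def pairEquiv {ι α : Type*} (iv jv : ι → α) (hne : ∀ k, iv k ≠ jv k)
    (hpart : ∀ t, ∃! k, t = iv k ∨ t = jv k) : Fin 2 × ι ≃ α :=
  Equiv.ofBijective (fun p => ![iv p.2, jv p.2] p.1) <| by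
    refine ⟨fun ⟨a, k⟩ ⟨b, l⟩ h => ?_, fun t => ?_⟩
    · have hk : ![iv k, jv k] a = iv k ∨ ![iv k, jv k] a = jv k := by fin_cases a <;> simp
      have hl : ![iv k, jv k] a = iv l ∨ ![iv k, jv k] a = jv l := by
        simp only at h; rw [h]; fin_cases b <;> simp
      obtain rfl := (hpart _).unique hk hl
      fin_cases a <;> fin_cases b <;> simp_all [(hne k).symm]
    · obtain ⟨k, rfl | rfl, -⟩ := hpart t
      exacts [⟨(0, k), rfl⟩, ⟨(1, k), rfl⟩]

lemma isExtGivens_reindex_blockDiagonal_mulSingle {ι : Type*} [Fintype ι] [DecidableEq ι]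
    {d : ℕ} (e : Fin 2 × ι ≃ Fin d) (k : ι) {g : Matrix (Fin 2) (Fin 2) ℝ}
    (hg : IsRotationOrReflection g) :
    IsExtGivens (e (0, k)) (e (1, k)) (reindex e e (blockDiagonal (Pi.mulSingle k g))) := by
  have hM : ∀ p q, reindex e e (blockDiagonal (Pi.mulSingle k g)) (e p) (e q) =
      blockDiagonal (Pi.mulSingle k g) p q := by simp
  obtain ⟨c, s, hcs, hg⟩ := hg
  refine ⟨⟨c, s, hcs, ?_⟩, fun t ht₀ ht₁ => ?_, fun t q htq hij hji => ?_⟩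
  · rcases hg with rfl | rfl <;> simp [hM]
  · obtain ⟨⟨a, l⟩, rfl⟩ := e.surjective t
    have hl : l ≠ k := by rintro rfl; fin_cases a <;> simp_all
    simp [hM, Pi.mulSingle_eq_of_ne hl]
  · obtain ⟨⟨a, l⟩, rfl⟩ := e.surjective t
    obtain ⟨⟨b, l'⟩, rfl⟩ := e.surjective q
    rw [hM, blockDiagonal_apply]
    dsimp only
    split_ifs with hll'
    · subst hll'
      by_cases hl : l = k
      · subst hl
        fin_cases a <;> fin_cases b <;> simp_all
      · have hab : a ≠ b := by rintro rfl; exact htq rfl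
        simp [Pi.mulSingle_eq_of_ne hl, one_apply_ne hab]
    · rfl

/-- For even `d = 2m`, a real orthogonal `d×d` matrix `U` and a partition of the indices
into `m` disjoint pairs `(iv k, jv k)`, there exist extended orthogonal Givens
transformations `G k` on the pairs `(iv k, jv k)` such that
`‖U − G₁ ⋯ G_m‖_F² = 2d − 2 Σ_k ‖U_{⟨iv k, jv k⟩}‖_*`. -/
theorem stmt7 {m : ℕ} (U : Matrix (Fin (2 * m)) (Fin (2 * m)) ℝ) (hU : Uᵀ * U = 1)
    (iv jv : Fin m → Fin (2 * m))
    (hlt : ∀ k, iv k < jv k)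
    (hpart : ∀ t : Fin (2 * m), ∃! k : Fin m, t = iv k ∨ t = jv k) :
    ∃ G : Fin m → Matrix (Fin (2 * m)) (Fin (2 * m)) ℝ,
      (∀ k, IsExtGivens (iv k) (jv k) (G k)) ∧
      frobSq (U - (List.ofFn G).prod) =
        2 * (2 * m : ℝ) - 2 * ∑ k, nuclearNorm (sub2 U (iv k) (jv k)) := by
  choose g hg hgU using fun k =>
    exists_isRotationOrReflection_frobInner_eq_nuclearNorm (sub2 U (iv k) (jv k))
  set e := pairEquiv iv jv (fun k => (hlt k).ne) hpart
  let φ := (reindexRingEquiv ℝ e).toRingHom.comp (blockDiagonalRingHom (Fin 2) (Fin m) ℝ)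
  refine ⟨fun k => φ (Pi.mulSingle k (g k)),
    fun k => isExtGivens_reindex_blockDiagonal_mulSingle e k (hg k), ?_⟩
  have hP : (List.ofFn fun k => φ (Pi.mulSingle k (g k))).prod =
      reindex e e (blockDiagonal g) := by
    have h := map_list_prod φ (List.ofFn fun k => Pi.mulSingle k (g k))
    rw [List.prod_ofFn_pi_mulSingle, List.map_ofFn] at h
    exact h.symm
  have hUblock : ∀ k, (reindex e.symm e.symm U).submatrix (·, k) (·, k) =
      sub2 U (iv k) (jv k) := by
    intro k; ext a b; fin_cases a <;> fin_cases b <;> rfl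
  have hgblock : ∀ k, (blockDiagonal g).submatrix (·, k) (·, k) = g k := by
    intro k; ext a b; simp
  rw [hP, frobSq_eq_frobInner, frobInner_sub_sub, frobInner_self_of_transpose_mul_self hU,
    frobInner_reindex, frobInner_reindex_right, frobInner_blockDiagonal, frobInner_blockDiagonal]
  simp only [hUblock, hgblock, hgU, (hg _).frobInner_self, Fintype.card_fin, Finset.sum_const,
    Finset.card_univ, nsmul_eq_mul]
  push_cast
  ring
end

section
/- Let U be a real orthogonal d×d matrix, let i < j, and let G be an extended orthogonal Givens transformation on (i,j) whose 2×2 block G̃ satisfies tr(G̃ᵀ U_{⟨i,j⟩}) = ‖U_{⟨i,j⟩}‖_*. Then off(U Gᵀ)² ≤ off(U)² + U_ii² + U_jj² − ½·‖U_{⟨i,j⟩}‖_*². -/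
open Matrix

/-!
Right multiplication by `Gᵀ` only mixes columns `i` and `j`, by an orthogonal 2×2 block, so it
preserves the Frobenius norm and every diagonal entry outside `{i, j}`. Hence
`off(UGᵀ)² = off(U)² + U_ii² + U_jj² − (M_ii² + M_jj²)` with `M = UGᵀ`, and
`M_ii + M_jj = tr(G̃ᵀ U_{⟨i,j⟩}) = ‖U_{⟨i,j⟩}‖_*`, so `M_ii² + M_jj² ≥ ½ ‖U_{⟨i,j⟩}‖_*²`.
-/

lemma offSq_eq_frobSq_sub {d : ℕ} (Z : Matrix (Fin d) (Fin d) ℝ) :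
    offSq Z = frobSq Z - ∑ t, Z t t ^ 2 := by
  rw [offSq, frobSq, ← Finset.sum_sub_distrib]
  refine Finset.sum_congr rfl fun t _ => ?_
  rw [eq_sub_iff_add_eq, ← Finset.sum_filter, Finset.filter_ne,
    Finset.sum_erase_add _ _ (Finset.mem_univ t)]

namespace IsExtGivens

variable {d : ℕ} {i j : Fin d} {G : Matrix (Fin d) (Fin d) ℝ}

lemma block_columns_orthonormal (hG : IsExtGivens i j G) :
    G i i ^ 2 + G j i ^ 2 = 1 ∧ G i j ^ 2 + G j j ^ 2 = 1 ∧ G i i * G i j + G j i * G j j = 0 := by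
  obtain ⟨⟨c, s, hcs, ⟨h1, h2, h3, h4⟩ | ⟨h1, h2, h3, h4⟩⟩, -⟩ := hG <;>
    rw [h1, h2, h3, h4] <;> refine ⟨by linear_combination hcs, by linear_combination hcs, by ring⟩

lemma apply_of_ne (hG : IsExtGivens i j G) {k l : Fin d} (hk : k ≠ i ∧ k ≠ j) (hkl : k ≠ l) :
    G k l = 0 :=
  hG.2.2 k l hkl (fun h => hk.1 h.1) (fun h => hk.2 h.1)

lemma apply_left_of_ne (hG : IsExtGivens i j G) (hij : i ≠ j) {k : Fin d} (hk : k ≠ i ∧ k ≠ j) :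
    G i k = 0 :=
  hG.2.2 i k (Ne.symm hk.1) (fun h => hk.2 h.2) (fun h => hij h.1)

lemma apply_right_of_ne (hG : IsExtGivens i j G) (hij : i ≠ j) {k : Fin d}
    (hk : k ≠ i ∧ k ≠ j) : G j k = 0 :=
  hG.2.2 j k (Ne.symm hk.2) (fun h => hij h.1.symm) (fun h => hk.1 h.2)

section Rectangular

variable {m : ℕ} (U : Matrix (Fin m) (Fin d) ℝ)

lemma mul_transpose_apply_of_ne (hG : IsExtGivens i j G) (t : Fin m) {q : Fin d}
    (hq : q ≠ i ∧ q ≠ j) : (U * Gᵀ) t q = U t q := by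
  rw [mul_apply, Finset.sum_eq_single q (fun k _ hk => by
    rw [transpose_apply, hG.apply_of_ne hq (Ne.symm hk), mul_zero]) (by simp),
    transpose_apply, hG.2.1 q hq.1 hq.2, mul_one]

lemma mul_transpose_apply_left (hG : IsExtGivens i j G) (hij : i ≠ j) (t : Fin m) :
    (U * Gᵀ) t i = U t i * G i i + U t j * G i j := by
  rw [mul_apply, Fintype.sum_eq_add i j hij fun k hk => by
    rw [transpose_apply, hG.apply_left_of_ne hij hk, mul_zero]]
  rfl

lemma mul_transpose_apply_right (hG : IsExtGivens i j G) (hij : i ≠ j) (t : Fin m) :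
    (U * Gᵀ) t j = U t i * G j i + U t j * G j j := by
  rw [mul_apply, Fintype.sum_eq_add i j hij fun k hk => by
    rw [transpose_apply, hG.apply_right_of_ne hij hk, mul_zero]]
  rfl

lemma frobSq_mul_transpose (hG : IsExtGivens i j G) (hij : i ≠ j) :
    frobSq (U * Gᵀ) = frobSq U := by
  refine Finset.sum_congr rfl fun t _ => ?_
  rw [← sub_eq_zero, ← Finset.sum_sub_distrib, Fintype.sum_eq_add i j hij fun k hk => by
    rw [hG.mul_transpose_apply_of_ne U t hk, sub_self],
    hG.mul_transpose_apply_left U hij, hG.mul_transpose_apply_right U hij]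
  obtain ⟨hi, hj, hij'⟩ := hG.block_columns_orthonormal
  linear_combination U t i ^ 2 * hi + U t j ^ 2 * hj + 2 * U t i * U t j * hij'

end Rectangular

lemma offSq_mul_transpose (hG : IsExtGivens i j G) (hij : i ≠ j)
    (U : Matrix (Fin d) (Fin d) ℝ) :
    offSq (U * Gᵀ) =
      offSq U + U i i ^ 2 + U j j ^ 2 - ((U * Gᵀ) i i ^ 2 + (U * Gᵀ) j j ^ 2) := by
  have hdiag : ∑ t, (U t t ^ 2 - (U * Gᵀ) t t ^ 2) =
      (U i i ^ 2 - (U * Gᵀ) i i ^ 2) + (U j j ^ 2 - (U * Gᵀ) j j ^ 2) :=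
    Fintype.sum_eq_add i j hij fun k hk => by
      rw [hG.mul_transpose_apply_of_ne U k hk, sub_self]
  rw [Finset.sum_sub_distrib] at hdiag
  rw [offSq_eq_frobSq_sub, offSq_eq_frobSq_sub, hG.frobSq_mul_transpose U hij]
  linarith

lemma mul_transpose_diag_add (hG : IsExtGivens i j G) (hij : i ≠ j)
    (U : Matrix (Fin d) (Fin d) ℝ) :
    (U * Gᵀ) i i + (U * Gᵀ) j j = ((sub2 G i j)ᵀ * sub2 U i j).trace := by
  rw [hG.mul_transpose_apply_left U hij, hG.mul_transpose_apply_right U hij]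
  simp only [sub2, trace_fin_two, transpose_apply, mul_apply, Fin.sum_univ_two, of_apply,
    cons_val', cons_val_zero, cons_val_one, empty_val', cons_val_fin_one, Fin.isValue]
  ring

end IsExtGivens

theorem stmt12_general {d : ℕ} (U G : Matrix (Fin d) (Fin d) ℝ)
    (i j : Fin d) (hij : i < j) (hG : IsExtGivens i j G)
    (hopt : ((sub2 G i j)ᵀ * sub2 U i j).trace = nuclearNorm (sub2 U i j)) :
    offSq (U * Gᵀ) ≤
      offSq U + (U i i) ^ 2 + (U j j) ^ 2 - (1 / 2) * (nuclearNorm (sub2 U i j)) ^ 2 := by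
  have hdiag := hG.mul_transpose_diag_add hij.ne U
  rw [hG.offSq_mul_transpose hij.ne, ← hopt, ← hdiag]
  -- `(a + b)² ≤ 2 (a² + b²)`
  nlinarith [sq_nonneg ((U * Gᵀ) i i - (U * Gᵀ) j j)]

/-- If `U` is real orthogonal and `G` is an extended orthogonal Givens transformation on
`(i,j)` whose block `G̃` satisfies `tr(G̃ᵀ U_{⟨i,j⟩}) = ‖U_{⟨i,j⟩}‖_*`, then
`off(U Gᵀ)² ≤ off(U)² + U_ii² + U_jj² − ½ ‖U_{⟨i,j⟩}‖_*²`. -/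
theorem stmt12 {d : ℕ} (U G : Matrix (Fin d) (Fin d) ℝ) (hU : Uᵀ * U = 1)
    (i j : Fin d) (hij : i < j) (hG : IsExtGivens i j G)
    (hopt : ((sub2 G i j)ᵀ * sub2 U i j).trace = nuclearNorm (sub2 U i j)) :
    offSq (U * Gᵀ) ≤
      offSq U + (U i i) ^ 2 + (U j j) ^ 2 - (1 / 2) * (nuclearNorm (sub2 U i j)) ^ 2 :=
  stmt12_general U G i j hij hG hopt
end

section
/- (Theorem 5) Let U and Ū be real orthogonal d×d matrices with columns u₁, …, u_d and ū₁, …, ū_d respectively, and assume u_iᵀ ū_i ≥ 0 for all i = 1, …, d. Set ε_min = min_i u_iᵀ ū_i. Then the operator norm of the error matrix satisfies ‖U − Ū‖₂ ≤ 1 − ε_min + √((d − 1)·(1 − ε_min²)). -/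
open Matrix

/-!
`U - Ū = Ū (W - 1)` with `W = Ūᵀ U` orthogonal, so `‖U - Ū‖₂ = ‖W - 1‖₂`. The diagonal of `W`
lies in `[ε_min, 1]`, and the off-diagonal entries of a row or column of `W` have squares summing
to at most `1 - ε_min²`, hence (Cauchy–Schwarz) absolute values summing to at most
`√((d - 1)(1 - ε_min²))`. The Schur test `‖A‖₂ ≤ √(max row sum · max column sum)` of `|A|`
finishes the proof.
-/

theorem sum_abs_erase_le_sqrt {n : Type*} [Fintype n] [DecidableEq n] {w : n → ℝ}
    (hw : ∑ q, w q ^ 2 = 1) {t : n} {ε : ℝ} (hε : 0 ≤ ε) (hεt : ε ≤ w t) :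
    ∑ q ∈ Finset.univ.erase t, |w q| ≤ √((Fintype.card n - 1) * (1 - ε ^ 2)) := by
  refine Real.le_sqrt_of_sq_le ?_
  have hrest : ∑ q ∈ Finset.univ.erase t, w q ^ 2 = 1 - w t ^ 2 := by
    rw [← hw, ← Finset.add_sum_erase _ _ (Finset.mem_univ t)]
    ring
  calc (∑ q ∈ Finset.univ.erase t, |w q|) ^ 2
      ≤ (Finset.univ.erase t).card * ∑ q ∈ Finset.univ.erase t, |w q| ^ 2 :=
        sq_sum_le_card_mul_sum_sq
    _ = (Fintype.card n - 1) * (1 - w t ^ 2) := by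
        simp only [sq_abs, hrest, Finset.cast_card_erase_of_mem (Finset.mem_univ t),
          Finset.card_univ]
    _ ≤ (Fintype.card n - 1) * (1 - ε ^ 2) := by
        have : (1 : ℝ) ≤ Fintype.card n := by exact_mod_cast Fintype.card_pos_iff.2 ⟨t⟩
        gcongr

namespace Matrix

variable {n : Type*} [Fintype n] [DecidableEq n]

theorem norm_toEuclideanCLM_le_sqrt_mul (A : Matrix n n ℝ) {R C : ℝ}
    (hrow : ∀ i, ∑ j, |A i j| ≤ R) (hcol : ∀ j, ∑ i, |A i j| ≤ C) :
    ‖toEuclideanCLM (𝕜 := ℝ) A‖ ≤ √(R * C) := by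
  refine ContinuousLinearMap.opNorm_le_bound _ (Real.sqrt_nonneg _) fun x => ?_
  rw [← Real.sqrt_sq (norm_nonneg x), ← Real.sqrt_mul' _ (sq_nonneg _)]
  refine Real.le_sqrt_of_sq_le ?_
  rw [EuclideanSpace.real_norm_sq_eq, EuclideanSpace.real_norm_sq_eq]
  simp only [ofLp_toEuclideanCLM, mulVec, dotProduct]
  calc ∑ i, (∑ j, A i j * x j) ^ 2
      ≤ ∑ i, (∑ j, |A i j|) * ∑ j, |A i j| * x j ^ 2 := by
        gcongr with i
        exact Finset.sum_sq_le_sum_mul_sum_of_sq_le_mul _ (fun j _ => abs_nonneg _)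
          (fun j _ => by positivity) fun j _ => by rw [mul_pow, ← mul_assoc, abs_mul_abs_self, sq]
    _ ≤ ∑ i, R * ∑ j, |A i j| * x j ^ 2 := by
        gcongr with i
        exact hrow i
    _ = ∑ j, R * (∑ i, |A i j|) * x j ^ 2 := by
        simp only [Finset.mul_sum, Finset.sum_mul]
        rw [Finset.sum_comm]
        simp only [mul_assoc]
    _ ≤ ∑ j, R * C * x j ^ 2 := by
        gcongr with j
        · exact (Finset.sum_nonneg fun i _ => abs_nonneg _).trans (hrow j)
        · exact hcol j
    _ = R * C * ∑ j, x j ^ 2 := by rw [Finset.mul_sum]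

theorem norm_toEuclideanCLM_mul_of_transpose_mul_self {Q : Matrix n n ℝ} (hQ : Qᵀ * Q = 1)
    (A : Matrix n n ℝ) :
    ‖toEuclideanCLM (𝕜 := ℝ) (Q * A)‖ = ‖toEuclideanCLM (𝕜 := ℝ) A‖ := by
  have hQ' : Q ∈ unitaryGroup n ℝ := by
    rwa [mem_unitaryGroup_iff', star_eq_conjTranspose, conjTranspose_eq_transpose_of_trivial]
  rw [map_mul]
  exact CStarRing.norm_coe_unitary_mul
    ⟨_, Unitary.map_mem (toEuclideanCLM (n := n) (𝕜 := ℝ)) hQ'⟩ _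

theorem sum_abs_sub_one_row_le {W : Matrix n n ℝ} (hW : W * Wᵀ = 1) {t : n} {ε : ℝ}
    (hε : 0 ≤ ε) (hεt : ε ≤ W t t) :
    ∑ q, |(W - 1) t q| ≤ 1 - ε + √((Fintype.card n - 1) * (1 - ε ^ 2)) := by
  have hrow : ∑ q, W t q ^ 2 = 1 := by
    simpa [mul_apply, sq] using congrFun (congrFun hW t) t
  have hdiag : W t t ≤ 1 := by
    have : W t t ^ 2 ≤ 1 :=
      hrow ▸ Finset.single_le_sum (fun q _ => sq_nonneg (W t q)) (Finset.mem_univ t)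
    exact le_of_abs_le ((sq_le_one_iff_abs_le_one _).1 this)
  have hoff : ∑ q ∈ Finset.univ.erase t, |(W - 1) t q| = ∑ q ∈ Finset.univ.erase t, |W t q| :=
    Finset.sum_congr rfl fun q hq => by
      rw [sub_apply, one_apply_ne (Finset.ne_of_mem_erase hq).symm, sub_zero]
  rw [← Finset.add_sum_erase _ _ (Finset.mem_univ t), hoff, sub_apply, one_apply_eq,
    abs_of_nonpos (by linarith)]
  linarith [sum_abs_erase_le_sqrt hrow hε hεt]

theorem norm_toEuclideanCLM_sub_one_le [Nonempty n] {W : Matrix n n ℝ} (hW : Wᵀ * W = 1)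
    {ε : ℝ} (hε : 0 ≤ ε) (hεW : ∀ i, ε ≤ W i i) :
    ‖toEuclideanCLM (n := n) (𝕜 := ℝ) (W - 1)‖ ≤
      1 - ε + √((Fintype.card n - 1) * (1 - ε ^ 2)) := by
  have hrow := fun i => sum_abs_sub_one_row_le (mul_eq_one_comm.mp hW) hε (hεW i)
  have hcol : ∀ j, ∑ i, |(W - 1) i j| ≤ 1 - ε + √((Fintype.card n - 1) * (1 - ε ^ 2)) :=
    fun j => by
      have := sum_abs_sub_one_row_le (W := Wᵀ) (by rwa [transpose_transpose]) hε (hεW j)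
      rwa [← transpose_one, ← transpose_sub] at this
  obtain ⟨i⟩ := ‹Nonempty n›
  have hbound_nonneg := (Finset.sum_nonneg fun j _ => abs_nonneg _).trans (hrow i)
  simpa only [Real.sqrt_mul_self hbound_nonneg] using norm_toEuclideanCLM_le_sqrt_mul _ hrow hcol

end Matrix

/-- Theorem 5: if `U, Ū` are real orthogonal with columns satisfying `uᵢᵀ ūᵢ ≥ 0` for all
`i`, and `ε_min = min_i uᵢᵀ ūᵢ`, then `‖U − Ū‖₂ ≤ 1 − ε_min + √((d−1)(1 − ε_min²))`. -/
theorem stmt14 {d : ℕ} (U Ubar : Matrix (Fin d) (Fin d) ℝ)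
    (hU : Uᵀ * U = 1) (hUbar : Ubarᵀ * Ubar = 1)
    (hpos : ∀ i : Fin d, 0 ≤ ∑ t, U t i * Ubar t i)
    (εmin : ℝ)
    (hε : IsLeast {x : ℝ | ∃ i : Fin d, x = ∑ t, U t i * Ubar t i} εmin) :
    ‖Matrix.toEuclideanCLM (𝕜 := ℝ) (U - Ubar)‖ ≤
      1 - εmin + Real.sqrt (((d : ℝ) - 1) * (1 - εmin ^ 2)) := by
  obtain ⟨⟨i₀, hi₀⟩, hmin⟩ := hε
  have : Nonempty (Fin d) := ⟨i₀⟩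
  set W := Ubarᵀ * U
  have hdiag (i : Fin d) : W i i = ∑ t, U t i * Ubar t i := by
    simp [W, mul_apply, mul_comm]
  have hW : Wᵀ * W = 1 := by
    rw [transpose_mul, transpose_transpose, Matrix.mul_assoc, ← Matrix.mul_assoc Ubar,
      mul_eq_one_comm.mp hUbar, Matrix.one_mul, hU]
  have hsplit : U - Ubar = Ubar * (W - 1) := by
    rw [Matrix.mul_sub, ← Matrix.mul_assoc, mul_eq_one_comm.mp hUbar, Matrix.one_mul,
      Matrix.mul_one]
  rw [hsplit, norm_toEuclideanCLM_mul_of_transpose_mul_self hUbar]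
  simpa using norm_toEuclideanCLM_sub_one_le hW (hi₀ ▸ hpos i₀)
    fun i => hdiag i ▸ hmin ⟨i, rfl⟩
end

section
/- Let Q be a real orthogonal d×d matrix with d ≥ 2, and let λ be any complex eigenvalue of I − Q. Then there exists an index i ∈ {1, …, d} such that |λ − (1 − Q_ii)| ≤ √((d − 1)·(1 − Q_ii²)). -/
/-!
Gershgorin's theorem puts every eigenvalue `z` of `I - Q` within `∑_{j ≠ k} |Q k j|` of the
diagonal entry `1 - Q k k` for some row `k`. Since the rows of an orthogonal matrix are unit
vectors, `∑_{j ≠ k} Q k j ^ 2 = 1 - Q k k ^ 2`, and Cauchy–Schwarz over the `d - 1` off-diagonal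
entries bounds that radius by `√((d - 1) (1 - Q k k ^ 2))`.
-/

open Matrix Finset

theorem Finset.sum_abs_le_sqrt_card_mul_sum_sq {ι : Type*} (s : Finset ι) (f : ι → ℝ) :
    ∑ i ∈ s, |f i| ≤ √(#s * ∑ i ∈ s, f i ^ 2) :=
  Real.le_sqrt_of_sq_le <| by
    simpa only [sq_abs] using sq_sum_le_card_mul_sum_sq (s := s) (f := fun i => |f i|)

namespace Matrix

variable {n : Type*} [Fintype n] [DecidableEq n]

theorem sum_sq_row_eq_one_of_transpose_mul_self {Q : Matrix n n ℝ} (hQ : Qᵀ * Q = 1) (i : n) :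
    ∑ j, Q i j ^ 2 = 1 := by
  have hQQt : Q * Qᵀ = 1 := mul_eq_one_comm.mp hQ
  simpa [mul_apply, sq] using congrFun (congrFun hQQt i) i

theorem sum_erase_sq_row_of_transpose_mul_self {Q : Matrix n n ℝ} (hQ : Qᵀ * Q = 1) (i : n) :
    ∑ j ∈ univ.erase i, Q i j ^ 2 = 1 - Q i i ^ 2 := by
  rw [← sum_sq_row_eq_one_of_transpose_mul_self hQ i, ← add_sum_erase _ _ (mem_univ i)]
  ring

theorem exists_norm_sub_diag_le_of_map_ofReal_mulVec_eq_smul (A : Matrix n n ℝ) {z : ℂ}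
    {v : n → ℂ} (hv : v ≠ 0) (hev : A.map Complex.ofReal *ᵥ v = z • v) :
    ∃ k, ‖z - A k k‖ ≤ ∑ j ∈ univ.erase k, |A k j| := by
  have hz : Module.End.HasEigenvalue (toLin' (A.map Complex.ofReal)) z :=
    Module.End.hasEigenvalue_of_hasEigenvector
      ⟨Module.End.mem_eigenspace_iff.mpr (by simpa [toLin'_apply] using hev), hv⟩
  obtain ⟨k, hk⟩ := eigenvalue_mem_ball hz
  exact ⟨k, by simpa [Complex.dist_eq, Complex.norm_real] using hk⟩

end Matrix

theorem stmt18_general {d : ℕ} (Q : Matrix (Fin d) (Fin d) ℝ) (hQ : Qᵀ * Q = 1)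
    (z : ℂ) (v : Fin d → ℂ) (hv : v ≠ 0)
    (hev : (((1 : Matrix (Fin d) (Fin d) ℝ) - Q).map Complex.ofReal) *ᵥ v = z • v) :
    ∃ i : Fin d,
      ‖z - (1 - (Q i i : ℂ))‖ ≤
        Real.sqrt (((d : ℝ) - 1) * (1 - (Q i i) ^ 2)) := by
  obtain ⟨k, hk⟩ := exists_norm_sub_diag_le_of_map_ofReal_mulVec_eq_smul (1 - Q) hv hev
  have hoff : ∑ j ∈ univ.erase k, |(1 - Q) k j| = ∑ j ∈ univ.erase k, |Q k j| :=
    sum_congr rfl fun j hj => by simp [one_apply_ne' (ne_of_mem_erase hj)]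
  have hcard : (#(univ.erase k) : ℝ) = d - 1 := by
    rw [card_erase_of_mem (mem_univ k), card_fin, Nat.cast_pred k.pos]
  rw [hoff, Matrix.sub_apply, one_apply_eq, Complex.ofReal_sub, Complex.ofReal_one] at hk
  refine ⟨k, ?_⟩
  calc ‖z - (1 - (Q k k : ℂ))‖ ≤ ∑ j ∈ univ.erase k, |Q k j| := hk
    _ ≤ √(#(univ.erase k) * ∑ j ∈ univ.erase k, Q k j ^ 2) :=
      sum_abs_le_sqrt_card_mul_sum_sq _ _
    _ = √((d - 1) * (1 - Q k k ^ 2)) := by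
      rw [hcard, sum_erase_sq_row_of_transpose_mul_self hQ k]

/-- Gershgorin-type bound: if `Q` is a real orthogonal `d×d` matrix (`d ≥ 2`) and `λ` is
any complex eigenvalue of `I − Q`, then there is an index `i` such that
`|λ − (1 − Q_ii)| ≤ √((d − 1)(1 − Q_ii²))`. -/
theorem stmt18 {d : ℕ} (hd : 2 ≤ d) (Q : Matrix (Fin d) (Fin d) ℝ) (hQ : Qᵀ * Q = 1)
    (z : ℂ) (v : Fin d → ℂ) (hv : v ≠ 0)
    (hev : (((1 : Matrix (Fin d) (Fin d) ℝ) - Q).map Complex.ofReal) *ᵥ v = z • v) :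
    ∃ i : Fin d,
      ‖z - (1 - (Q i i : ℂ))‖ ≤
        Real.sqrt (((d : ℝ) - 1) * (1 - (Q i i) ^ 2)) :=
  stmt18_general Q hQ z v hv hev
end
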